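/- arXiv:2507.13282 — 5 statements merged into one kernel-verified Lean document; each statement's English description precedes it below -/
import Mathlib

section
/- If there exists a nonempty set of points P that is stable with respect to a CNF formula F and some transport function g : P → F, then F is unsatisfiable. -/
/-- A point `p` satisfies a clause `C` (a finite set of literals) if it
satisfies some literal of `C`. -/
def satClause {X : Type*} (p : X → Bool) (C : Finset (X × Bool)) : Prop :=
  ∃ l ∈ C, p l.1 = l.2

/-- The 1-neighborhood of a point `p` with respect to a clause `C`: points
differing from `p` in exactly one variable that satisfy `C`. -/
def Nbhd {X : Type*} (p : X → Bool) (C : Finset (X × Bool)) : Set (X → Bool) :=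
  {q | (∃! x, q x ≠ p x) ∧ satClause q C}

theorem stmt_0 {X : Type*} [Fintype X] [DecidableEq X]
    (F : Finset (Finset (X × Bool)))
    (hF : ∀ C ∈ F, ∀ l₁ ∈ C, ∀ l₂ ∈ C, (l₁ : X × Bool).1 = (l₂ : X × Bool).1 → l₁ = l₂)
    (P : Set (X → Bool)) (hP : P.Nonempty)
    (g : (X → Bool) → Finset (X × Bool))
    (hg : ∀ p ∈ P, g p ∈ F ∧ ¬ satClause p (g p))
    (hstab : ∀ p ∈ P, Nbhd p (g p) ⊆ P) :
    ¬ ∃ p : X → Bool, ∀ C ∈ F, satClause p C := by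
  rintro ⟨s, hs⟩
  -- distance to s
  set d : (X → Bool) → ℕ := fun p => (Finset.univ.filter (fun x => p x ≠ s x)).card with hd
  -- strong induction: no p ∈ P with d p = n
  have key : ∀ n : ℕ, ∀ p ∈ P, d p ≠ n := by
    intro n
    induction n using Nat.strong_induction_on with
    | _ n ih =>
      intro p hpP hdp
      obtain ⟨hgF, hgfals⟩ := hg p hpP
      obtain ⟨l, hl, hsl⟩ := hs (g p) hgF
      have hpl : p l.1 ≠ l.2 := fun h => hgfals ⟨l, hl, h⟩
      set q : X → Bool := Function.update p l.1 l.2 with hq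
      have hqx : q l.1 = l.2 := Function.update_self _ _ _
      have hqy : ∀ y, y ≠ l.1 → q y = p y := fun y hy => Function.update_of_ne hy _ _
      have hqN : q ∈ Nbhd p (g p) := by
        refine ⟨⟨l.1, by simp [hqx, Ne.symm hpl], ?_⟩, ⟨l, hl, hqx⟩⟩
        intro y hy
        by_contra hne
        exact hy (hqy y hne)
      have hqP : q ∈ P := hstab p hpP hqN
      have hsub : Finset.univ.filter (fun x => q x ≠ s x) ⊂
          Finset.univ.filter (fun x => p x ≠ s x) := by
        constructor
        · intro y hy
          simp only [Finset.mem_filter, Finset.mem_univ, true_and] at hy ⊢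
          by_cases h : y = l.1
          · subst h; exact fun h' => hpl (h' ▸ hsl ▸ rfl)
          · rwa [hqy y h] at hy
        · intro hsub'
          have : l.1 ∈ Finset.univ.filter (fun x => p x ≠ s x) := by
            simp only [Finset.mem_filter, Finset.mem_univ, true_and]
            rw [hsl]; exact hpl
          have := hsub' this
          simp only [Finset.mem_filter, Finset.mem_univ, true_and] at this
          exact this (by rw [hqx, hsl])
      have : d q < n := hdp ▸ Finset.card_lt_card hsub
      exact ih (d q) this q hqP rfl
  obtain ⟨p, hp⟩ := hP
  exact key (d p) p hp rfl
end

section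
/- Let F be a CNF formula and P₁,…,P_k be sets of points falsifying F, with transport functions gᵢ : Pᵢ → F for i = 1,…,k, such that for every i the set Nbhd(Pᵢ, gᵢ) (the union over p ∈ Pᵢ of Nbhd(p, gᵢ(p))) is contained in P₁ ∪ … ∪ P_k (i.e., {P₁,…,P_k} is a stable set of clusters). If P₁ ∪ … ∪ P_k is nonempty, then P₁ ∪ … ∪ P_k is a stable set of points with respect to F and some transport function, and consequently F is unsatisfiable. -/
theorem stmt_3 {X : Type*} [Fintype X] [DecidableEq X]
    (F : Finset (Finset (X × Bool)))
    (hF : ∀ C ∈ F, ∀ l₁ ∈ C, ∀ l₂ ∈ C, (l₁ : X × Bool).1 = (l₂ : X × Bool).1 → l₁ = l₂)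
    (k : ℕ) (P : Fin k → Set (X → Bool))
    (g : Fin k → (X → Bool) → Finset (X × Bool))
    -- every `gᵢ` is a transport function on `Pᵢ` (so the points of `Pᵢ` falsify `F`)
    (hg : ∀ i, ∀ p ∈ P i, g i p ∈ F ∧ ¬ satClause p (g i p))
    -- `{P₁,…,P_k}` is a stable set of clusters: `Nbhd(Pᵢ,gᵢ) ⊆ P₁ ∪ … ∪ P_k`
    (hstab : ∀ i, ∀ p ∈ P i, Nbhd p (g i p) ⊆ ⋃ j, P j)
    (hne : (⋃ j, P j).Nonempty) :
    (∃ g' : (X → Bool) → Finset (X × Bool),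
        (∀ p ∈ ⋃ j, P j, g' p ∈ F ∧ ¬ satClause p (g' p)) ∧
        (∀ p ∈ ⋃ j, P j, Nbhd p (g' p) ⊆ ⋃ j, P j)) ∧
    ¬ ∃ p : X → Bool, ∀ C ∈ F, satClause p C := by
  classical
  set S : Set (X → Bool) := ⋃ j, P j with hS
  -- construct g'
  set g' : (X → Bool) → Finset (X × Bool) :=
    fun p => if h : ∃ i, p ∈ P i then g h.choose p else ∅ with hg'
  have hmem : ∀ p ∈ S, ∃ i, p ∈ P i := by
    intro p hp
    simpa [hS, Set.mem_iUnion] using hp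
  have key1 : ∀ p ∈ S, g' p ∈ F ∧ ¬ satClause p (g' p) := by
    intro p hp
    have h := hmem p hp
    simp only [hg', dif_pos h]
    exact hg h.choose p h.choose_spec
  have key2 : ∀ p ∈ S, Nbhd p (g' p) ⊆ S := by
    intro p hp
    have h := hmem p hp
    simp only [hg', dif_pos h]
    exact hstab h.choose p h.choose_spec
  refine ⟨⟨g', key1, key2⟩, ?_⟩
  rintro ⟨s, hs⟩
  -- distance to s
  set d : (X → Bool) → ℕ :=
    fun p => (Finset.univ.filter (fun x => p x ≠ s x)).card with hd
  have hex : ∃ n, ∃ p ∈ S, d p = n := ⟨d hne.choose, hne.choose, hne.choose_spec, rfl⟩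
  obtain ⟨p, hpS, hpd⟩ := Nat.find_spec hex
  obtain ⟨hF', hfals⟩ := key1 p hpS
  -- s satisfies g' p, p falsifies it
  obtain ⟨⟨x, b⟩, hlmem, hlsat⟩ := hs _ hF'
  have hpx : p x ≠ b := fun h => hfals ⟨(x, b), hlmem, h⟩
  set q : X → Bool := Function.update p x b with hq
  have hqx : q x = b := by simp [hq]
  have hqy : ∀ y, y ≠ x → q y = p y := by
    intro y hy; simp [hq, Function.update_of_ne hy]
  have hqN : q ∈ Nbhd p (g' p) := by
    refine ⟨⟨x, by show q x ≠ p x; rw [hqx]; exact fun h => hpx h.symm, ?_⟩, ⟨(x, b), hlmem, hqx⟩⟩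
    intro y hy
    by_contra hyx
    exact hy (hqy y hyx ▸ rfl)
  have hqS : q ∈ S := key2 p hpS hqN
  -- d q < d p
  have hsub : Finset.univ.filter (fun y => q y ≠ s y)
      = (Finset.univ.filter (fun y => p y ≠ s y)).erase x := by
    ext y
    simp only [Finset.mem_filter, Finset.mem_erase, Finset.mem_univ, true_and]
    constructor
    · intro hy
      have hyx : y ≠ x := by
        rintro rfl
        exact hy (hqx.trans hlsat.symm)
      exact ⟨hyx, by rwa [hqy y hyx] at hy⟩
    · rintro ⟨hyx, hy⟩
      rwa [hqy y hyx]
  have hxmem : x ∈ Finset.univ.filter (fun y => p y ≠ s y) := by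
    simp only [Finset.mem_filter, Finset.mem_univ, true_and]
    exact fun h => hpx (h.trans hlsat)
  have hlt : d q < d p := by
    rw [hd]
    simp only [hsub]
    exact Finset.card_erase_lt_of_mem hxmem
  have := Nat.find_min' hex ⟨q, hqS, rfl⟩
  omega
end

section
/- Let F be a CNF formula over variables X that is symmetric with respect to every permutation in a group G of permutations of X (i.e., π(F) = F for all π ∈ G). Let P be a nonempty set of points falsifying F and g : P → F a transport function such that P is stable modulo symmetry G with respect to F and g: for every p ∈ P, every point p' ∈ Nbhd(p, g(p)) either belongs to P or is of the form π(p'') for some π ∈ G and some p'' ∈ P. Then F is unsatisfiable. -/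
/-- The action of a permutation `π` of the variables on a point:
`π(p) = p ∘ π⁻¹`. -/
def permPoint {X : Type*} (π : Equiv.Perm X) (p : X → Bool) : X → Bool :=
  fun x => p (π.symm x)

/-- The action of a permutation `π` of the variables on a clause. -/
def permClause {X : Type*} [DecidableEq X] (π : Equiv.Perm X)
    (C : Finset (X × Bool)) : Finset (X × Bool) :=
  C.image fun l => (π l.1, l.2)

section

variable {X : Type*}

lemma permPoint_mul (σ τ : Equiv.Perm X) (p : X → Bool) :
    permPoint σ (permPoint τ p) = permPoint (σ * τ) p :=
  rfl

lemma hammingDist_permPoint [Fintype X] (σ : Equiv.Perm X) (p q : X → Bool) :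
    hammingDist (permPoint σ p) (permPoint σ q) = hammingDist p q :=
  Finset.card_equiv σ.symm fun _ => by simp only [Finset.mem_filter, Finset.mem_univ, true_and]; rfl

variable [DecidableEq X]

lemma satClause_permPoint_permClause {π : Equiv.Perm X} {p : X → Bool}
    {C : Finset (X × Bool)} (h : satClause p C) :
    satClause (permPoint π p) (permClause π C) := by
  obtain ⟨l, hl, hpl⟩ := h
  exact ⟨(π l.1, l.2), Finset.mem_image_of_mem _ hl, by simpa [permPoint] using hpl⟩

lemma satClause_permPoint_of_image_eq {π : Equiv.Perm X}
    {F : Finset (Finset (X × Bool))} (hF : F.image (permClause π) = F) {s : X → Bool}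
    (hs : ∀ C ∈ F, satClause s C) : ∀ C ∈ F, satClause (permPoint π s) C := by
  intro C hC
  rw [← hF] at hC
  obtain ⟨C', hC', rfl⟩ := Finset.mem_image.mp hC
  exact satClause_permPoint_permClause (hs C' hC')

lemma update_mem_Nbhd {p : X → Bool} {C : Finset (X × Bool)} {l : X × Bool}
    (hl : l ∈ C) (hpl : p l.1 ≠ l.2) : Function.update p l.1 l.2 ∈ Nbhd p C := by
  refine ⟨⟨l.1, by simpa using hpl.symm, fun y hy => ?_⟩, l, hl, Function.update_self ..⟩
  by_contra hne
  exact hy (Function.update_of_ne hne ..)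

variable [Fintype X]

lemma hammingDist_update_lt {p s : X → Bool} {x : X} (hx : p x ≠ s x) :
    hammingDist (Function.update p x (s x)) s < hammingDist p s := by
  refine Finset.card_lt_card ⟨fun y hy => ?_, fun hsub => ?_⟩
  · rcases eq_or_ne y x with rfl | hne
    · simp at hy
    · simpa [Function.update_of_ne hne] using hy
  · simpa using hsub (by simpa using hx : x ∈ _)

lemma exists_mem_Nbhd_hammingDist_lt {p s : X → Bool} {C : Finset (X × Bool)}
    (hp : ¬ satClause p C) (hs : satClause s C) :
    ∃ q ∈ Nbhd p C, hammingDist q s < hammingDist p s := by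
  obtain ⟨l, hl, hsl⟩ := hs
  have hpl : p l.1 ≠ l.2 := fun h => hp ⟨l, hl, h⟩
  refine ⟨_, update_mem_Nbhd hl hpl, ?_⟩
  rw [← hsl] at hpl ⊢
  exact hammingDist_update_lt hpl

end

theorem stmt_6_general {X : Type*} [Fintype X] [DecidableEq X]
    (F : Finset (Finset (X × Bool)))
    (G : Subgroup (Equiv.Perm X))
    -- `F` is symmetric with respect to every permutation of `G`
    (hsym : ∀ π ∈ G, F.image (permClause π) = F)
    (P : Set (X → Bool)) (hP : P.Nonempty)
    (g : (X → Bool) → Finset (X × Bool))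
    -- `g` is a transport function on `P`
    (hg : ∀ p ∈ P, g p ∈ F ∧ ¬ satClause p (g p))
    -- `P` is stable modulo symmetry `G` with respect to `F` and `g`
    (hstab : ∀ p ∈ P, ∀ p' ∈ Nbhd p (g p),
        p' ∈ P ∨ ∃ π ∈ G, ∃ p'' ∈ P, p' = permPoint π p'') :
    ¬ ∃ p : X → Bool, ∀ C ∈ F, satClause p C := by
  rintro ⟨s, hs⟩
  let d : (X → Bool) × Equiv.Perm X → ℕ := fun x => hammingDist x.1 (permPoint x.2 s)
  have descent : ∀ p ∈ P, ∀ π ∈ G, ∃ p' ∈ P, ∃ π' ∈ G, d (p', π') < d (p, π) := by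
    intro p hp π hπ
    obtain ⟨hgF, hpg⟩ := hg p hp
    obtain ⟨q, hq, hlt⟩ := exists_mem_Nbhd_hammingDist_lt hpg
      (satClause_permPoint_of_image_eq (hsym π hπ) hs _ hgF)
    rcases hstab p hp q hq with hqP | ⟨σ, hσ, p'', hp'', rfl⟩
    · exact ⟨q, hqP, π, hπ, hlt⟩
    · refine ⟨p'', hp'', σ⁻¹ * π, mul_mem (inv_mem hσ) hπ, ?_⟩
      show hammingDist p'' (permPoint (σ⁻¹ * π) s) < _
      rwa [← hammingDist_permPoint σ, permPoint_mul, mul_inv_cancel_left]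
  obtain ⟨p₀, hp₀⟩ := hP
  obtain ⟨⟨p, π⟩, ⟨hp, hπ⟩, hmin⟩ := (InvImage.wf d wellFounded_lt).has_min
    {x | x.1 ∈ P ∧ x.2 ∈ G} ⟨(p₀, 1), hp₀, one_mem G⟩
  obtain ⟨p', hp', π', hπ', hlt⟩ := descent p hp π hπ
  exact hmin (p', π') ⟨hp', hπ'⟩ hlt

theorem stmt_6 {X : Type*} [Fintype X] [DecidableEq X]
    (F : Finset (Finset (X × Bool)))
    (hF : ∀ C ∈ F, ∀ l₁ ∈ C, ∀ l₂ ∈ C, (l₁ : X × Bool).1 = (l₂ : X × Bool).1 → l₁ = l₂)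
    (G : Subgroup (Equiv.Perm X))
    -- `F` is symmetric with respect to every permutation of `G`
    (hsym : ∀ π ∈ G, F.image (permClause π) = F)
    (P : Set (X → Bool)) (hP : P.Nonempty)
    (g : (X → Bool) → Finset (X × Bool))
    -- `g` is a transport function on `P`
    (hg : ∀ p ∈ P, g p ∈ F ∧ ¬ satClause p (g p))
    -- `P` is stable modulo symmetry `G` with respect to `F` and `g`
    (hstab : ∀ p ∈ P, ∀ p' ∈ Nbhd p (g p),
        p' ∈ P ∨ ∃ π ∈ G, ∃ p'' ∈ P, p' = permPoint π p'') :
    ¬ ∃ p : X → Bool, ∀ C ∈ F, satClause p C :=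
  stmt_6_general F G hsym P hP g hg hstab
end

section
/- Let F be a CNF formula over a finite set of Boolean variables X. Suppose Q₁,…,Q_k are cubes, not all empty, and C₁,…,C_k are clauses of F such that for every i the cube Qᵢ falsifies Cᵢ (i.e., Qᵢ ⊆ Unsat(Cᵢ)), and for every variable x occurring in Cᵢ the 1-neighborhood cube Nbhd(Qᵢ,x) is contained in Q₁ ∪ … ∪ Q_k. Then Q₁ ∪ … ∪ Q_k is a stable set of points with respect to F and some transport function, and consequently F is unsatisfiable. -/
theorem stmt_10 {X : Type*} [Fintype X] [DecidableEq X]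
    (F : Finset (Finset (X × Bool)))
    (hF : ∀ C ∈ F, ∀ l₁ ∈ C, ∀ l₂ ∈ C, (l₁ : X × Bool).1 = (l₂ : X × Bool).1 → l₁ = l₂)
    (k : ℕ) (Q : Fin k → Set (X → Bool))
    -- every `Qᵢ` is a cube
    (hcube : ∀ i, ∃ B : X → Set Bool, (∀ x, (B x).Nonempty) ∧
        Q i = {p : X → Bool | ∀ x, p x ∈ B x})
    -- the cubes are not all empty
    (hne : (⋃ j, Q j).Nonempty)
    (C : Fin k → Finset (X × Bool)) (hCF : ∀ i, C i ∈ F)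
    -- every cube `Qᵢ` falsifies the clause `Cᵢ`, i.e. `Qᵢ ⊆ Unsat(Cᵢ)`
    (hfals : ∀ i, Q i ⊆ {p : X → Bool | ¬ satClause p (C i)})
    -- for every variable `x` of `Cᵢ`, the 1-neighborhood cube `Nbhd(Qᵢ,x)`
    -- is contained in `Q₁ ∪ … ∪ Q_k`
    (hstab : ∀ i, ∀ x : X, (∃ b, (x, b) ∈ C i) →
        (⋃ p ∈ Q i, {Function.update p x (!(p x))}) ⊆ ⋃ j, Q j) :
    (∃ g : (X → Bool) → Finset (X × Bool),
        (∀ p ∈ ⋃ j, Q j, g p ∈ F ∧ ¬ satClause p (g p)) ∧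
        (∀ p ∈ ⋃ j, Q j, Nbhd p (g p) ⊆ ⋃ j, Q j)) ∧
    ¬ ∃ p : X → Bool, ∀ D ∈ F, satClause p D := by
  classical
  set S : Set (X → Bool) := ⋃ j, Q j with hSdef
  -- transport function
  let g : (X → Bool) → Finset (X × Bool) := fun p =>
    if h : ∃ j, p ∈ Q j then C h.choose else ∅
  have hkey : ∀ p ∈ S, g p ∈ F ∧ ¬ satClause p (g p) ∧ Nbhd p (g p) ⊆ S := by
    intro p hp
    have h : ∃ j, p ∈ Q j := by simpa [hSdef] using hp
    have hgp : g p = C h.choose := by simp [g, h]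
    have hpQ : p ∈ Q h.choose := h.choose_spec
    refine ⟨hgp ▸ hCF _, hgp ▸ hfals _ hpQ, ?_⟩
    rw [hgp]
    rintro q ⟨⟨x, hx, hux⟩, l, hl, hql⟩
    -- the flipped variable must be l.1
    have hxl : x = l.1 := by
      by_contra hne'
      have : q l.1 = p l.1 := by
        by_contra hq
        exact hne' ((hux l.1 hq).symm ▸ rfl)
      exact hfals h.choose hpQ ⟨l, hl, this ▸ hql⟩
    have hq : q = Function.update p x (!(p x)) := by
      funext y
      by_cases hy : y = x
      · subst hy
        have := hx
        simp only [Function.update_self]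
        cases hqy : q y <;> cases hpy : p y <;> simp_all
      · have : q y = p y := by
          by_contra hqy
          exact hy (hux y hqy)
        simp [Function.update_of_ne hy, this]
    have := hstab h.choose x ⟨l.2, by rw [hxl]; simpa using hl⟩
    apply this
    rw [hq]
    exact Set.mem_biUnion hpQ rfl
  constructor
  · exact ⟨g, fun p hp => ⟨(hkey p hp).1, (hkey p hp).2.1⟩,
      fun p hp => (hkey p hp).2.2⟩
  · rintro ⟨p, hp⟩
    -- distance to the satisfying point
    let d : (X → Bool) → ℕ := fun q => (Finset.univ.filter (fun x => q x ≠ p x)).card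
    obtain ⟨q, hqS, hqmin⟩ := Set.exists_min_image S d (Set.toFinite S) hne
    obtain ⟨hgF, hgfals, hnb⟩ := hkey q hqS
    have hsat := hp (g q) hgF
    obtain ⟨l, hl, hpl⟩ := hsat
    have hql : q l.1 ≠ l.2 := fun h => hgfals ⟨l, hl, h⟩
    set q' : X → Bool := Function.update q l.1 l.2 with hq'def
    have hq'S : q' ∈ S := by
      apply hnb
      refine ⟨⟨l.1, ?_, ?_⟩, ⟨l, hl, by simp [hq'def]⟩⟩
      · simp [hq'def, Ne.symm hql]
      · intro y hy
        by_contra hyl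
        exact hy (Function.update_of_ne hyl _ _)
    have hlt : d q' < d q := by
      apply Finset.card_lt_card
      constructor
      · intro y hy
        simp only [Finset.mem_filter, Finset.mem_univ, true_and] at hy ⊢
        by_cases hyl : y = l.1
        · subst hyl
          simp [hq'def, hpl] at hy
        · rwa [hq'def, Function.update_of_ne hyl] at hy
      · intro hsub
        have hmem : l.1 ∈ Finset.univ.filter (fun x => q x ≠ p x) := by
          simp [hpl ▸ hql]
        have := hsub hmem
        simp [hq'def, hpl] at this
    exact absurd (hqmin q' hq'S) (not_le.mpr hlt)
end

section
/- Let F be a CNF formula over a finite set of Boolean variables X. If F is satisfiable and at least one point falsifies F, then there exist a point p satisfying F and a clause C ∈ F such that p satisfies exactly one literal of C. -/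
theorem stmt_12 {X : Type*} [Fintype X] [DecidableEq X]
    (F : Finset (Finset (X × Bool)))
    (hF : ∀ C ∈ F, ∀ l₁ ∈ C, ∀ l₂ ∈ C, (l₁ : X × Bool).1 = (l₂ : X × Bool).1 → l₁ = l₂)
    -- `F` is satisfiable
    (hsat : ∃ p : X → Bool, ∀ C ∈ F, satClause p C)
    -- at least one point falsifies `F`
    (hfals : ∃ q : X → Bool, ∃ C ∈ F, ¬ satClause q C) :
    -- there is a satisfying assignment `p` and a clause `C ∈ F` such that
    -- `p` satisfies exactly one literal of `C`
    ∃ p : X → Bool, ∃ C ∈ F, (∀ D ∈ F, satClause p D) ∧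
      ∃! l : X × Bool, l ∈ C ∧ p l.1 = l.2 := by
  obtain ⟨p₀, hp₀⟩ := hsat
  obtain ⟨q, C₀, hC₀F, hqC₀⟩ := hfals
  suffices H : ∀ n (p : X → Bool),
      (Finset.univ.filter (fun x => p x ≠ q x)).card = n →
      (∀ C ∈ F, satClause p C) →
      ∃ p : X → Bool, ∃ C ∈ F, (∀ D ∈ F, satClause p D) ∧
        ∃! l : X × Bool, l ∈ C ∧ p l.1 = l.2 by
    exact H _ p₀ rfl hp₀
  intro n
  induction n using Nat.strong_induction_on with
  | _ n ih =>
    intro p hcard hp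
    have hne : p ≠ q := by
      intro h
      exact hqC₀ (h ▸ hp C₀ hC₀F)
    obtain ⟨x, hx⟩ : ∃ x, p x ≠ q x := Function.ne_iff.mp hne
    set p' := Function.update p x (q x) with hp'def
    by_cases h' : ∀ C ∈ F, satClause p' C
    · have hsub : Finset.univ.filter (fun y => p' y ≠ q y) ⊂
          Finset.univ.filter (fun y => p y ≠ q y) := by
        constructor
        · intro y hy
          simp only [Finset.mem_filter, Finset.mem_univ, true_and] at hy ⊢
          by_cases hyx : y = x
          · subst hyx
            simp [hp'def] at hy
          · rwa [hp'def, Function.update_of_ne hyx] at hy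
        · intro hsub
          have hxmem : x ∈ Finset.univ.filter (fun y => p y ≠ q y) := by
            simp [hx]
          have := hsub hxmem
          simp [hp'def] at this
      exact ih _ (hcard ▸ Finset.card_lt_card hsub) p' rfl h'
    · push_neg at h'
      obtain ⟨D, hDF, hD⟩ := h'
      obtain ⟨l, hlD, hl⟩ := hp D hDF
      have key : ∀ m ∈ D, p m.1 = m.2 → m.1 = x := by
        intro m hmD hm
        by_contra hmx
        exact hD ⟨m, hmD, by rw [hp'def, Function.update_of_ne hmx]; exact hm⟩
      refine ⟨p, D, hDF, hp, l, ⟨hlD, hl⟩, ?_⟩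
      rintro m ⟨hmD, hm⟩
      exact hF D hDF m hmD l hlD ((key m hmD hm).trans (key l hlD hl).symm)
end
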